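/- There exists a simple graph G on the positive integers that is I_13-free and satisfies liminf_{n→∞} e(G_n)/n² ≥ 57931/249696, i.e., ≥ (1/4)(1 − 1/13) + 4015/3246048. -/

import Mathlib

/-!
Cut each range `[64 * 2^m, 128 * 2^m)` into 13 consecutive blocks of lengths `w_j * 2^m`, with
`w = (5, 5, 5, 4, 4, 4, 5, 5, 6, 5, 5, 6, 5)`, give every vertex of block `j` the label `π j` for
a fixed permutation `π` of `{0, …, 12}`, and join `u < v` exactly when the label of `u` is
smaller. Labels strictly increase along an increasing path, so no path has 13 edges. Counting
only the edges into a vertex from earlier blocks bounds `e(G_n)` below by a function that is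
affine in `n` on each block, while `57931 / 249696 * n² - 30 n` is convex in `n`; so it
suffices to compare the two at block boundaries, where both are quadratics in `2^m`, and that
leaves 13 checks on their coefficients.
-/

open Filter

/-- `G` contains an increasing path of length `k`: vertices
`i₁ < i₂ < ⋯ < i_{k+1}` (all positive integers) with consecutive vertices adjacent. -/
def HasIncPath (G : SimpleGraph ℕ) (k : ℕ) : Prop :=
  ∃ f : Fin (k + 1) → ℕ, (∀ i, 1 ≤ f i) ∧ StrictMono f ∧
    ∀ i : Fin k, G.Adj (f i.castSucc) (f i.succ)

/-- `e(G_n)`: the number of edges of the subgraph of `G` induced by `{1, …, n}`. -/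
noncomputable def edgeCount (G : SimpleGraph ℕ) (n : ℕ) : ℕ :=
  {p : ℕ × ℕ | 1 ≤ p.1 ∧ p.1 < p.2 ∧ p.2 ≤ n ∧ G.Adj p.1 p.2}.ncard


open Finset

section EdgeCount

variable (G : SimpleGraph ℕ) [DecidableRel G.Adj]

def backDegree (v : ℕ) : ℕ := #{u ∈ Ico 1 v | G.Adj u v}

theorem edgeCount_eq_sum_backDegree (n : ℕ) :
    edgeCount G n = ∑ v ∈ Icc 1 n, backDegree G v := by
  have hset : {p : ℕ × ℕ | 1 ≤ p.1 ∧ p.1 < p.2 ∧ p.2 ≤ n ∧ G.Adj p.1 p.2} =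
      ↑({p ∈ Icc 1 n ×ˢ Icc 1 n | p.1 < p.2 ∧ G.Adj p.1 p.2}) := by
    ext ⟨u, v⟩
    simp only [Set.mem_ofPred_eq, coe_filter, mem_product, mem_Icc]
    constructor
    · rintro ⟨h1, h2, h3, h4⟩
      exact ⟨⟨⟨h1, by omega⟩, by omega, h3⟩, h2, h4⟩
    · rintro ⟨⟨⟨h1, -⟩, -, h3⟩, h2, h4⟩
      exact ⟨h1, h2, h3, h4⟩
  rw [edgeCount, hset, Set.ncard_coe_finset, card_filter, sum_product_right]
  refine sum_congr rfl fun v hv => ?_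
  rw [mem_Icc] at hv
  rw [backDegree, card_filter, ← sum_filter, ← sum_filter]
  congr 1
  ext u
  simp only [mem_filter, mem_Icc, mem_Ico]
  exact ⟨fun ⟨⟨h1, _⟩, h2, h3⟩ => ⟨⟨h1, h2⟩, h3⟩,
    fun ⟨⟨h1, h2⟩, h3⟩ => ⟨⟨h1, by omega⟩, h2, h3⟩⟩

theorem edgeCount_le_sq (n : ℕ) : edgeCount G n ≤ n ^ 2 := by
  rw [edgeCount_eq_sum_backDegree, sq]
  calc ∑ v ∈ Icc 1 n, backDegree G v ≤ ∑ _v ∈ Icc 1 n, n :=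
        sum_le_sum fun v hv =>
          (card_filter_le _ _).trans (by rw [Nat.card_Ico]; rw [mem_Icc] at hv; omega)
    _ = n * n := by simp

end EdgeCount

def labelGraph (f : ℕ → ℕ) : SimpleGraph ℕ :=
  SimpleGraph.fromRel fun u v => u < v ∧ f u < f v

instance (f : ℕ → ℕ) : DecidableRel (labelGraph f).Adj :=
  inferInstanceAs (DecidableRel (SimpleGraph.fromRel _).Adj)

theorem labelGraph_adj_of_lt {f : ℕ → ℕ} {u v : ℕ} (h : u < v) :
    (labelGraph f).Adj u v ↔ f u < f v := by
  simp only [labelGraph, SimpleGraph.fromRel_adj]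
  omega

theorem not_hasIncPath_labelGraph {f : ℕ → ℕ} {k : ℕ} (hf : ∀ v, f v < k) :
    ¬ HasIncPath (labelGraph f) k := by
  rintro ⟨p, -, hmono, hadj⟩
  have hle : ∀ j : Fin (k + 1), (j : ℕ) ≤ f (p j) := by
    intro j
    induction j using Fin.induction with
    | zero => exact Nat.zero_le _
    | succ i ih =>
      have := (labelGraph_adj_of_lt (hmono i.castSucc_lt_succ)).1 (hadj i)
      simp only [Fin.val_castSucc, Fin.val_succ] at ih ⊢
      omega
  have := hle (Fin.last k)
  have := hf (p (Fin.last k))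
  simp only [Fin.val_last] at *
  omega

section Blocks

variable (start : ℕ → ℕ) (c : ℕ → ℕ)

/-- Block `t` is `[start t, start (t + 1))`; vertices below `start 0` land in block `0`. -/
def blockOf (v : ℕ) : ℕ := Nat.findGreatest (fun t => start t ≤ v) v

def blockGain (t : ℕ) : ℕ := ∑ s ∈ range t with c s < c t, (start (s + 1) - start s)

def cumGain (T : ℕ) : ℕ := ∑ s ∈ range T, (start (s + 1) - start s) * blockGain start c s

variable {start}

theorem blockOf_eq (hs : StrictMono start) {t v : ℕ} (h1 : start t ≤ v)
    (h2 : v < start (t + 1)) :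
    blockOf start v = t := by
  rw [blockOf, Nat.findGreatest_eq_iff]
  exact ⟨(hs.id_le t).trans h1, fun _ => h1,
    fun n hn _ hle => (h2.trans_le (hs.monotone hn)).not_ge hle⟩

theorem blockOf_spec (hs : StrictMono start) {v : ℕ} (h : start 0 ≤ v) :
    start (blockOf start v) ≤ v ∧ v < start (blockOf start v + 1) := by
  refine ⟨Nat.findGreatest_spec (P := fun t => start t ≤ v) (Nat.zero_le v) h, ?_⟩
  by_contra! hle
  have := Nat.le_findGreatest (P := fun t => start t ≤ v) ((hs.id_le _).trans hle) hle
  exact (blockOf start v).lt_succ_self.not_ge this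

theorem card_filter_blockOf (hs : StrictMono start) (P : ℕ → Prop) [DecidablePred P] (T : ℕ) :
    #{u ∈ Ico (start 0) (start T) | P (blockOf start u)} =
      ∑ s ∈ range T with P s, (start (s + 1) - start s) := by
  induction T with
  | zero => simp
  | succ T ih =>
    rw [← Ico_union_Ico_eq_Ico (hs.monotone (Nat.zero_le T)) (hs.monotone T.le_succ),
      filter_union,
      card_union_of_disjoint (disjoint_filter_filter (Ico_disjoint_Ico_consecutive _ _ _)), ih,
      sum_filter, sum_filter, sum_range_succ]
    congr 1
    have hblock : ∀ u ∈ Ico (start T) (start (T + 1)), blockOf start u = T := fun u hu =>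
      blockOf_eq hs (mem_Ico.1 hu).1 (mem_Ico.1 hu).2
    split_ifs with hP
    · rw [filter_true_of_mem fun u hu => hblock u hu ▸ hP, Nat.card_Ico]
    · rw [filter_false_of_mem fun u hu => hblock u hu ▸ hP, card_empty]

theorem blockGain_le_backDegree (hs : StrictMono start) (h0 : 1 ≤ start 0) {t v : ℕ}
    (h1 : start t ≤ v) (h2 : v < start (t + 1)) :
    blockGain start c t ≤ backDegree (labelGraph (c ∘ blockOf start)) v := by
  rw [blockGain, ← card_filter_blockOf hs (fun s => c s < c t)]
  refine card_le_card fun u hu => ?_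
  simp only [mem_filter, mem_Ico] at hu ⊢
  have huv : u < v := hu.1.2.trans_le h1
  refine ⟨⟨h0.trans hu.1.1, huv⟩, (labelGraph_adj_of_lt huv).2 ?_⟩
  simpa only [Function.comp, blockOf_eq hs h1 h2] using hu.2

theorem blockGain_mul_le_sum_backDegree (hs : StrictMono start) (h0 : 1 ≤ start 0) {t a b : ℕ}
    (ha : start t ≤ a) (hb : b ≤ start (t + 1)) :
    (b - a) * blockGain start c t ≤
      ∑ v ∈ Ico a b, backDegree (labelGraph (c ∘ blockOf start)) v := by
  rw [← Nat.card_Ico a b, ← smul_eq_mul]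
  refine card_nsmul_le_sum _ _ _ fun v hv => ?_
  rw [mem_Ico] at hv
  exact blockGain_le_backDegree c hs h0 (ha.trans hv.1) (hv.2.trans_le hb)

theorem cumGain_le_sum_backDegree (hs : StrictMono start) (h0 : 1 ≤ start 0) (T : ℕ) :
    cumGain start c T ≤
      ∑ v ∈ Ico (start 0) (start T), backDegree (labelGraph (c ∘ blockOf start)) v := by
  induction T with
  | zero => simp [cumGain]
  | succ T ih =>
    rw [cumGain, sum_range_succ, ← cumGain,
      ← sum_Ico_consecutive _ (hs.monotone (Nat.zero_le T)) (hs.monotone T.le_succ)]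
    exact add_le_add ih (blockGain_mul_le_sum_backDegree c hs h0 le_rfl le_rfl)

theorem cumGain_add_le_edgeCount (hs : StrictMono start) (h0 : 1 ≤ start 0) {T n : ℕ}
    (h1 : start T ≤ n + 1) (h2 : n + 1 ≤ start (T + 1)) :
    cumGain start c T + (n + 1 - start T) * blockGain start c T ≤
      edgeCount (labelGraph (c ∘ blockOf start)) n := by
  rw [edgeCount_eq_sum_backDegree]
  calc _ ≤ ∑ v ∈ Ico (start 0) (start T), backDegree (labelGraph (c ∘ blockOf start)) v +
        ∑ v ∈ Ico (start T) (n + 1), backDegree (labelGraph (c ∘ blockOf start)) v :=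
        add_le_add (cumGain_le_sum_backDegree c hs h0 T)
          (blockGain_mul_le_sum_backDegree c hs h0 le_rfl h2)
    _ = ∑ v ∈ Ico (start 0) (n + 1), backDegree (labelGraph (c ∘ blockOf start)) v :=
        sum_Ico_consecutive _ (hs.monotone (Nat.zero_le T)) h1
    _ ≤ ∑ v ∈ Icc 1 n, backDegree (labelGraph (c ∘ blockOf start)) v :=
        sum_le_sum_of_subset fun v hv => by simp only [mem_Ico, mem_Icc] at hv ⊢; omega

end Blocks

theorem mul_sq_le_of_endpoints {R : Type*} [CommRing R] [LinearOrder R] [IsStrictOrderedRing R]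
    {k p q a b x : R} (hk : 0 ≤ k) (hax : a ≤ x) (hxb : x ≤ b)
    (ha : k * a ^ 2 ≤ p + q * a) (hb : k * b ^ 2 ≤ p + q * b) : k * x ^ 2 ≤ p + q * x := by
  rcases (hax.trans hxb).eq_or_lt with hab | hab
  · obtain rfl : x = a := le_antisymm (hab ▸ hxb) hax
    exact ha
  · nlinarith [mul_nonneg (mul_nonneg hk (sub_nonneg.2 hax)) (sub_nonneg.2 hxb),
      mul_nonneg (sub_nonneg.2 hax) (sub_nonneg.2 hb),
      mul_nonneg (sub_nonneg.2 hxb) (sub_nonneg.2 ha)]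

theorem le_liminf_edgeCount_div_sq (G : SimpleGraph ℕ) {c C : ℝ}
    (h : ∀ n : ℕ, c * n ^ 2 ≤ edgeCount G n + C * n) :
    c ≤ liminf (fun n : ℕ => (edgeCount G n : ℝ) / n ^ 2) atTop := by
  classical
  have hlow : ∀ᶠ n : ℕ in atTop, c - C / n ≤ (edgeCount G n : ℝ) / n ^ 2 := by
    filter_upwards [eventually_gt_atTop 0] with n hn
    have hn : (0 : ℝ) < n := Nat.cast_pos.2 hn
    have hCn : C / n * n ^ 2 = C * n := by field_simp
    rw [le_div_iff₀ (by positivity), sub_mul, hCn]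
    linarith [h n]
  have hup : ∀ n : ℕ, (edgeCount G n : ℝ) / n ^ 2 ≤ 1 := fun n =>
    div_le_one_of_le₀ (by exact_mod_cast edgeCount_le_sq G n) (by positivity)
  have htend : Tendsto (fun n : ℕ => c - C / n) atTop (nhds c) := by
    simpa using tendsto_const_nhds.sub (tendsto_const_div_atTop_nhds_zero_nat C)
  calc c = liminf (fun n : ℕ => c - C / n) atTop := htend.liminf_eq.symm
    _ ≤ _ := liminf_le_liminf hlow htend.isBoundedUnder_ge
        (isBoundedUnder_of ⟨1, hup⟩).isCoboundedUnder_ge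

theorem sum_range_mul_add {M : Type*} [AddCommMonoid M] (F : ℕ → M) (p m i : ℕ) :
    ∑ s ∈ range (p * m + i), F s =
      ∑ k ∈ range m, ∑ j ∈ range p, F (p * k + j) + ∑ j ∈ range i, F (p * m + j) := by
  rw [sum_range_add]
  congr 1
  induction m with
  | zero => simp
  | succ m ih => rw [mul_add, mul_one, sum_range_add, ih, sum_range_succ]

theorem quadratic_nonneg_of_one_le {R : Type*} [CommRing R] [LinearOrder R] [IsStrictOrderedRing R]
    {a b c x : R} (hx : 1 ≤ x) (ha : 0 ≤ a) (hab : 0 ≤ 2 * a + b) (habc : 0 ≤ a + b + c) :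
    0 ≤ a * x ^ 2 + b * x + c := by
  nlinarith [mul_nonneg ha (mul_nonneg (sub_nonneg.2 hx) (sub_nonneg.2 hx)),
    mul_nonneg hab (sub_nonneg.2 hx)]

def positionWeight : ℕ → ℕ
  | 0 => 5 | 1 => 5 | 2 => 5 | 3 => 4 | 4 => 4 | 5 => 4 | 6 => 5
  | 7 => 5 | 8 => 6 | 9 => 5 | 10 => 5 | 11 => 6 | _ => 5

def positionLabel : ℕ → ℕ
  | 0 => 7 | 1 => 8 | 2 => 9 | 3 => 0 | 4 => 11 | 5 => 1 | 6 => 10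
  | 7 => 2 | 8 => 12 | 9 => 3 | 10 => 4 | 11 => 5 | _ => 6

def cumWeight (i : ℕ) : ℕ := ∑ j ∈ range i, positionWeight j

def blockStart (t : ℕ) : ℕ := (64 + cumWeight (t % 13)) * 2 ^ (t / 13)

def blockLabel (t : ℕ) : ℕ := positionLabel (t % 13)

def dyadicBlockGraph : SimpleGraph ℕ := labelGraph (blockLabel ∘ blockOf blockStart)

theorem positionLabel_lt (i : ℕ) : positionLabel i < 13 := by
  unfold positionLabel; split <;> norm_num

theorem positionWeight_pos (i : ℕ) : 0 < positionWeight i := by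
  unfold positionWeight; split <;> norm_num

theorem blockStart_mul_add {m j : ℕ} (hj : j < 13) :
    blockStart (13 * m + j) = (64 + cumWeight j) * 2 ^ m := by
  rw [blockStart, show (13 * m + j) % 13 = j by omega, show (13 * m + j) / 13 = m by omega]

theorem blockLabel_mul_add {m j : ℕ} (hj : j < 13) :
    blockLabel (13 * m + j) = positionLabel j := by
  rw [blockLabel, show (13 * m + j) % 13 = j by omega]

theorem blockStart_mul_add_succ {m j : ℕ} (hj : j < 13) :
    blockStart (13 * m + j + 1) = blockStart (13 * m + j) + positionWeight j * 2 ^ m := by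
  rw [blockStart_mul_add hj]
  rcases (Nat.lt_succ_iff.1 hj).lt_or_eq with hj | rfl
  · rw [add_assoc, blockStart_mul_add (by omega : j + 1 < 13), cumWeight, sum_range_succ,
      ← cumWeight]
    ring
  · rw [show 13 * m + 12 + 1 = 13 * (m + 1) + 0 by ring, blockStart_mul_add (by norm_num),
      pow_succ, show cumWeight 0 = 0 from rfl, show cumWeight 12 = 59 by decide,
      show positionWeight 12 = 5 from rfl]
    ring

theorem blockSize_mul_add {m j : ℕ} (hj : j < 13) :
    blockStart (13 * m + j + 1) - blockStart (13 * m + j) = positionWeight j * 2 ^ m := by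
  rw [blockStart_mul_add_succ hj, Nat.add_sub_cancel_left]

theorem exists_eq_thirteen_mul_add (t : ℕ) : ∃ m j, j < 13 ∧ t = 13 * m + j :=
  ⟨t / 13, t % 13, Nat.mod_lt _ (by norm_num), (Nat.div_add_mod t 13).symm⟩

theorem blockStart_strictMono : StrictMono blockStart := by
  refine strictMono_nat_of_lt_succ fun t => ?_
  obtain ⟨m, j, hj, rfl⟩ := exists_eq_thirteen_mul_add t
  rw [blockStart_mul_add_succ hj]
  have := positionWeight_pos j
  have := Nat.one_le_two_pow (n := m)
  nlinarith

def periodGain (i : ℕ) : ℕ :=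
  ∑ j ∈ range 13 with positionLabel j < positionLabel i, positionWeight j

def partialGain (i : ℕ) : ℕ :=
  ∑ j ∈ range i with positionLabel j < positionLabel i, positionWeight j

def quadCoeff (i : ℕ) : ℕ :=
  ∑ j ∈ range i, positionWeight j * (periodGain j + partialGain j)

def linCoeff (i : ℕ) : ℕ := ∑ j ∈ range i, positionWeight j * periodGain j

theorem blockGain_mul_add {m i : ℕ} (hi : i < 13) :
    blockGain blockStart blockLabel (13 * m + i) =
      (2 ^ m - 1) * periodGain i + 2 ^ m * partialGain i := by
  have hterm : ∀ k j, j < 13 → (if blockLabel (13 * k + j) < blockLabel (13 * m + i) then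
      blockStart (13 * k + j + 1) - blockStart (13 * k + j) else 0) =
      2 ^ k * if positionLabel j < positionLabel i then positionWeight j else 0 := by
    intro k j hj
    rw [blockLabel_mul_add hj, blockLabel_mul_add hi, blockSize_mul_add hj]
    split_ifs <;> ring
  rw [blockGain, sum_filter, sum_range_mul_add,
    sum_congr rfl fun k _ => sum_congr rfl fun j hj => hterm k j (mem_range.1 hj),
    sum_congr rfl fun j hj => hterm m j ((mem_range.1 hj).trans hi)]
  simp only [← mul_sum, ← sum_mul, ← sum_filter, Nat.geomSum_eq le_rfl, periodGain,
    partialGain]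
  simp

theorem cumGain_mul_add {m i : ℕ} (hi : i ≤ 13) :
    3 * (cumGain blockStart blockLabel (13 * m + i) : ℤ) =
      quadCoeff 13 * (4 ^ m - 1) - 3 * linCoeff 13 * (2 ^ m - 1) +
        3 * (4 ^ m * quadCoeff i - 2 ^ m * linCoeff i) := by
  have hterm : ∀ k j, j < 13 → (((blockStart (13 * k + j + 1) - blockStart (13 * k + j)) *
      blockGain blockStart blockLabel (13 * k + j) : ℕ) : ℤ) =
      4 ^ k * (positionWeight j * (periodGain j + partialGain j) : ℕ) -
        2 ^ k * (positionWeight j * periodGain j : ℕ) := by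
    intro k j hj
    rw [blockSize_mul_add hj, blockGain_mul_add hj, show (4 : ℤ) = 2 * 2 by norm_num, mul_pow]
    push_cast [Nat.one_le_two_pow]
    ring
  have hperiod : ∀ k i, i ≤ 13 → ∑ j ∈ range i, (((blockStart (13 * k + j + 1) -
      blockStart (13 * k + j)) * blockGain blockStart blockLabel (13 * k + j) : ℕ) : ℤ) =
      4 ^ k * quadCoeff i - 2 ^ k * linCoeff i := by
    intro k i hi
    rw [sum_congr rfl fun j hj => hterm k j ((mem_range.1 hj).trans_le hi), sum_sub_distrib,
      ← mul_sum, ← mul_sum, quadCoeff, linCoeff]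
    push_cast
    rfl
  rw [cumGain, sum_range_mul_add]
  simp only [Nat.cast_add, Nat.cast_sum]
  rw [sum_congr rfl fun k _ => hperiod k 13 le_rfl, hperiod m i hi, sum_sub_distrib, ← sum_mul,
    ← sum_mul]
  linear_combination (quadCoeff 13 : ℤ) * geom_sum_mul (4 : ℤ) m -
    3 * (linCoeff 13 : ℤ) * geom_sum_mul (2 : ℤ) m

theorem bound_at_blockStart (T : ℕ) :
    57931 * ((blockStart T : ℤ) - 1) ^ 2 ≤
      249696 * ((cumGain blockStart blockLabel T : ℤ) + 30 * ((blockStart T : ℤ) - 1)) := by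
  obtain ⟨m, i, hi, rfl⟩ := exists_eq_thirteen_mul_add T
  -- With X = 2 ^ m, three times (right side - left side) is a * X ^ 2 + b * X + c.
  have hcoeff : ∀ i < 13,
      let a : ℤ := 249696 * (quadCoeff 13 + 3 * quadCoeff i) - 173793 * (64 + cumWeight i) ^ 2
      let b : ℤ := 22820226 * (64 + cumWeight i) - 749088 * (linCoeff 13 + linCoeff i)
      let c : ℤ := 249696 * (3 * linCoeff 13 - quadCoeff 13) - 22646433
      0 ≤ a ∧ 0 ≤ 2 * a + b ∧ 0 ≤ a + b + c := by
    decide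
  obtain ⟨ha, hab, habc⟩ := hcoeff i hi
  have hX := quadratic_nonneg_of_one_le (x := (2 : ℤ) ^ m) (one_le_pow₀ (by norm_num))
    ha hab habc
  have hE := cumGain_mul_add (m := m) hi.le
  rw [show (4 : ℤ) ^ m = (2 ^ m) ^ 2 by rw [← pow_mul, mul_comm, pow_mul]; norm_num] at hE
  rw [blockStart_mul_add hi]
  push_cast
  refine le_of_mul_le_mul_left ?_ (by norm_num : (0 : ℤ) < 3)
  linear_combination hX - 249696 * hE

theorem bound_inside_block {T n : ℕ} (h1 : blockStart T ≤ n + 1)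
    (h2 : n + 1 ≤ blockStart (T + 1)) :
    57931 * (n : ℤ) ^ 2 ≤ 249696 * (((cumGain blockStart blockLabel T +
      (n + 1 - blockStart T) * blockGain blockStart blockLabel T : ℕ) : ℤ) + 30 * n) := by
  have ha := bound_at_blockStart T
  have hb := bound_at_blockStart (T + 1)
  rw [cumGain, sum_range_succ, ← cumGain] at hb
  have hmono : blockStart T ≤ blockStart (T + 1) := blockStart_strictMono.monotone (by omega)
  push_cast [Nat.cast_sub h1, Nat.cast_sub hmono] at hb ⊢
  have := mul_sq_le_of_endpoints (k := (57931 : ℤ)) (x := n)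
    (a := blockStart T - 1) (b := blockStart (T + 1) - 1)
    (p := 249696 * (cumGain blockStart blockLabel T -
      (blockStart T - 1) * blockGain blockStart blockLabel T))
    (q := 249696 * (blockGain blockStart blockLabel T + 30)) (by norm_num)
    (by linarith [(Nat.cast_le (α := ℤ)).2 h1]) (by linarith [(Nat.cast_le (α := ℤ)).2 h2])
    (by linear_combination ha) (by linear_combination hb)
  linear_combination this

theorem edgeCount_dyadicBlockGraph_bound (n : ℕ) :
    57931 * n ^ 2 ≤ 249696 * (edgeCount dyadicBlockGraph n + 30 * n) := by
  have h0 : blockStart 0 = 64 := rfl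
  rcases lt_or_ge (n + 1) (blockStart 0) with hn | hn
  · nlinarith
  · obtain ⟨h1, h2⟩ := blockOf_spec blockStart_strictMono hn
    have hcount : _ ≤ edgeCount dyadicBlockGraph n :=
      cumGain_add_le_edgeCount blockLabel blockStart_strictMono (by rw [h0]; norm_num) h1 h2.le
    zify
    linarith [bound_inside_block h1 h2.le, (Nat.cast_le (α := ℤ)).2 hcount]

theorem exists_I13_free_graph_with_large_liminf :
    ∃ G : SimpleGraph ℕ, ¬ HasIncPath G 13 ∧
      (57931 / 249696 : ℝ) ≤
        liminf (fun n : ℕ => (edgeCount G n : ℝ) / n ^ 2) atTop := by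
  refine ⟨dyadicBlockGraph, not_hasIncPath_labelGraph fun _ => positionLabel_lt _,
    le_liminf_edgeCount_div_sq _ (C := 30) fun n => ?_⟩
  have : (57931 : ℝ) * n ^ 2 ≤ 249696 * (edgeCount dyadicBlockGraph n + 30 * n) := by
    exact_mod_cast edgeCount_dyadicBlockGraph_bound n
  linarith
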